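/- Let ρ_AB be a separable bipartite state on ℂ^{d_A} ⊗ ℂ^{d_B}, let a ∈ ℝ^m and b ∈ ℝ^n be arbitrary vectors, let {P^{(b_A)}_{n_A}} be a complete set of MUMs on ℂ^{d_A} with efficiency parameter κ_A and {Q^{(b_B)}_{n_B}} a complete set of MUMs on ℂ^{d_B} with efficiency parameter κ_B. Then ‖Q_{a,b}(ρ_AB)‖_tr ≤ √((|a|² + 1 + κ_A)·(|b|² + 1 + κ_B)). -/

import Mathlib

open scoped BigOperators ComplexOrder
open Matrix

noncomputable def traceNorm {m n : Type*} [Fintype m] [Fintype n] [DecidableEq n]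
    (X : Matrix m n ℂ) : ℝ :=
  ((Matrix.posSemidef_conjTranspose_mul_self X).1.eigenvectorUnitary.1 *
    Matrix.diagonal (((↑) : ℝ → ℂ) ∘ (Real.sqrt ∘ (Matrix.posSemidef_conjTranspose_mul_self X).1.eigenvalues)) *
    (star (Matrix.posSemidef_conjTranspose_mul_self X).1.eigenvectorUnitary :
      Matrix n n ℂ)).trace.re

def IsDensityMatrix {ι : Type*} [Fintype ι] (ρ : Matrix ι ι ℂ) : Prop :=
  ρ.PosSemidef ∧ ρ.trace = 1

def IsNMPOVM (d N M : ℕ) (x : ℝ)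
    (E : Fin N → Fin M → Matrix (Fin d) (Fin d) ℂ) : Prop :=
  (∀ α k, (E α k).PosSemidef) ∧
  (∀ α, ∑ k, E α k = 1) ∧
  (∀ α k, (E α k).trace = (((d : ℝ) / M : ℝ) : ℂ)) ∧
  (∀ α k, (E α k * E α k).trace = (x : ℂ)) ∧
  (∀ α k l, k ≠ l → (E α k * E α l).trace =
      ((((d : ℝ) - M * x) / (M * ((M : ℝ) - 1)) : ℝ) : ℂ)) ∧
  (∀ α β k l, α ≠ β → (E α k * E β l).trace = (((d : ℝ) / M ^ 2 : ℝ) : ℂ)) ∧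
  ((d : ℝ) / M ^ 2 < x ∧ x ≤ min ((d : ℝ) ^ 2 / M ^ 2) ((d : ℝ) / M))

def IsInfoComplete (d N M : ℕ) : Prop := ((M : ℝ) - 1) * N = (d : ℝ) ^ 2 - 1
open Kronecker

/-- Partial trace over the second factor. -/
noncomputable def ptraceB {dA dB : ℕ} (ρ : Matrix (Fin dA × Fin dB) (Fin dA × Fin dB) ℂ) :
    Matrix (Fin dA) (Fin dA) ℂ :=
  Matrix.of fun i j => ∑ k, ρ (i, k) (j, k)

/-- Partial trace over the first factor. -/
noncomputable def ptraceA {dA dB : ℕ} (ρ : Matrix (Fin dA × Fin dB) (Fin dA × Fin dB) ℂ) :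
    Matrix (Fin dB) (Fin dB) ℂ :=
  Matrix.of fun i j => ∑ k, ρ (k, i) (k, j)

/-- A bipartite state is separable if it is a finite convex combination of
tensor products of local density matrices. -/
def SeparableState {dA dB : ℕ} (ρ : Matrix (Fin dA × Fin dB) (Fin dA × Fin dB) ℂ) : Prop :=
  ∃ (K : ℕ) (p : Fin K → ℝ) (ρA : Fin K → Matrix (Fin dA) (Fin dA) ℂ)
    (ρB : Fin K → Matrix (Fin dB) (Fin dB) ℂ),
    (∀ i, 0 ≤ p i) ∧ (∑ i, p i = 1) ∧
    (∀ i, IsDensityMatrix (ρA i)) ∧ (∀ i, IsDensityMatrix (ρB i)) ∧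
    ρ = ∑ i, (p i : ℂ) • (ρA i ⊗ₖ ρB i)
/-- A complete set of d+1 mutually unbiased measurements (MUMs) on ℂ^d with
efficiency parameter κ. -/
def IsMUMs (d : ℕ) (κ : ℝ) (P : Fin (d + 1) → Fin d → Matrix (Fin d) (Fin d) ℂ) : Prop :=
  (∀ b n, (P b n).PosSemidef) ∧ (∀ b, ∑ n, P b n = 1) ∧
  (∀ b n, (P b n).trace = 1) ∧
  (∀ b n, (P b n * P b n).trace = (κ : ℂ)) ∧
  (∀ b n n', n ≠ n' → (P b n * P b n').trace = (((1 - κ) / ((d : ℝ) - 1) : ℝ) : ℂ)) ∧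
  (∀ b b' n n', b ≠ b' → (P b n * P b' n').trace = ((1 / (d : ℝ) : ℝ) : ℂ)) ∧
  (1 / (d : ℝ) < κ ∧ κ ≤ 1)

/-!
For a product state the matrix `Q_{a,b}` is the rank-one matrix `x yᵀ` with `x = (a, θ)` and
`y = (b, η)`; for a separable state `∑ᵢ wᵢ σᵢ ⊗ τᵢ` it is `∑ᵢ wᵢ xᵢ yᵢᵀ = A Bᴴ`, where the columns
of `A` and `B` are `√wᵢ xᵢ` and `√wᵢ yᵢ`. The Hölder inequality `‖A Bᴴ‖_tr ≤ ‖A‖₂ ‖B‖₂` reduces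
the claim to `∑_{b,n} tr(P⁽ᵇ⁾ₙ σ)² ≤ 1 + κ` for every state `σ`. For the traceless part
`X = σ - I/d` the operator `R = ∑ tr(P X) P` satisfies `tr R² = (κ - (1 - κ)/(d - 1)) tr(X R)` by
the Gram relations of the MUMs, so Cauchy–Schwarz and `tr X² ≤ 1 - 1/d` bound `∑ tr(P X)²`.
-/

namespace Matrix

variable {𝕜 : Type*} [RCLike 𝕜] {μ ν ι : Type*} [Fintype μ] [Fintype ν] [Fintype ι]

lemma IsHermitian.trace_mul_eq_ofReal_re {A B : Matrix ι ι 𝕜} (hA : A.IsHermitian)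
    (hB : B.IsHermitian) : (A * B).trace = (RCLike.re (A * B).trace : 𝕜) := by
  refine (RCLike.conj_eq_iff_re.mp ?_).symm
  rw [← RCLike.star_def, ← trace_conjTranspose, conjTranspose_mul, hA.eq, hB.eq, trace_mul_comm]

lemma re_trace_conjTranspose_mul_le (X Y : Matrix μ ν 𝕜) :
    RCLike.re (Xᴴ * Y).trace ≤
      √(RCLike.re (Xᴴ * X).trace) * √(RCLike.re (Yᴴ * Y).trace) := by
  have hinner : ∀ Z W : Matrix μ ν 𝕜,
      inner 𝕜 (WithLp.toLp 2 Z.vec) (WithLp.toLp 2 W.vec) = (Zᴴ * W).trace := fun Z W => by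
    rw [EuclideanSpace.inner_toLp_toLp, dotProduct_comm, star_vec_dotProduct_vec]
  simpa only [hinner, norm_eq_sqrt_re_inner (𝕜 := 𝕜)] using
    re_inner_le_norm (𝕜 := 𝕜) (WithLp.toLp 2 X.vec) (WithLp.toLp 2 Y.vec)

lemma re_trace_conjTranspose_mul_self_le_of_posSemidef_one_sub [DecidableEq μ]
    (A : Matrix μ ι 𝕜) {W : Matrix μ ν 𝕜} (hW : (1 - W * Wᴴ).PosSemidef) :
    RCLike.re ((Aᴴ * W)ᴴ * (Aᴴ * W)).trace ≤ RCLike.re (Aᴴ * A).trace := by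
  have hgap : 0 ≤ RCLike.re (Aᴴ * (1 - W * Wᴴ) * A).trace :=
    (RCLike.nonneg_iff.mp (hW.conjTranspose_mul_mul_same A).trace_nonneg).1
  have hcycle : ((Aᴴ * W)ᴴ * (Aᴴ * W)).trace = (Aᴴ * (W * Wᴴ) * A).trace := by
    rw [conjTranspose_mul, conjTranspose_conjTranspose, ← trace_mul_cycle, ← trace_mul_cycle]
    simp only [Matrix.mul_assoc]
  rw [Matrix.mul_sub, Matrix.sub_mul, Matrix.mul_one, trace_sub, map_sub] at hgap
  rw [hcycle]
  linarith

lemma trace_unitary_mul_mul_star [DecidableEq ι] (U : unitary (Matrix ι ι 𝕜)) (X : Matrix ι ι 𝕜) :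
    ((U : Matrix ι ι 𝕜) * X * star (U : Matrix ι ι 𝕜)).trace = X.trace := by
  rw [trace_mul_cycle, Unitary.star_mul_self_of_mem U.2, Matrix.one_mul]

lemma posSemidef_one_sub_of_isHermitian_of_mul_self [DecidableEq ι] {E : Matrix ι ι 𝕜}
    (hE : E.IsHermitian) (hEE : E * E = E) : (1 - E).PosSemidef := by
  have h : (1 - E)ᴴ * (1 - E) = 1 - E := by
    rw [conjTranspose_sub, conjTranspose_one, hE.eq, Matrix.sub_mul, Matrix.one_mul,
      Matrix.mul_sub, Matrix.mul_one, hEE, sub_self, sub_zero]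
  exact h ▸ posSemidef_conjTranspose_mul_self (1 - E)

lemma exists_partialIsometry_conjTranspose_mul_mul_eq_diagonal [DecidableEq μ] [DecidableEq ν]
    (M : Matrix μ ν 𝕜) (V : Matrix ν ν 𝕜) (s : ν → ℝ)
    (hV : Vᴴ * (Mᴴ * M) * V = diagonal fun j => ((s j ^ 2 : ℝ) : 𝕜)) :
    ∃ W : Matrix μ ν 𝕜, Wᴴ * M * V = diagonal (fun j => (s j : 𝕜)) ∧
      (1 - W * Wᴴ).PosSemidef := by
  -- `(s j)⁻¹ = 0` where `s j = 0`, which makes `W` a partial isometry.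
  set g : ν → 𝕜 := fun j => ((s j)⁻¹ : ℝ)
  have hg : star g = g := funext fun j => RCLike.conj_ofReal _
  set W := M * V * diagonal g
  have hWH : Wᴴ = diagonal g * Vᴴ * Mᴴ := by
    simp only [W, conjTranspose_mul, diagonal_conjTranspose, hg, Matrix.mul_assoc]
  have hWMV : Wᴴ * M * V = diagonal g * diagonal fun j => ((s j ^ 2 : ℝ) : 𝕜) := by
    rw [← hV, hWH]
    simp only [Matrix.mul_assoc]
  have hWW : W * Wᴴ * (W * Wᴴ) = W * Wᴴ := by
    have : diagonal g * (Wᴴ * M * V) * diagonal g = diagonal g := by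
      rw [hWMV]
      simp only [diagonal_mul_diagonal, g]
      congr 1
      funext j
      rcases eq_or_ne (s j) 0 with h | h
      · simp [h]
      · push_cast
        field_simp
    calc W * Wᴴ * (W * Wᴴ) = M * V * (diagonal g * (Wᴴ * M * V) * diagonal g) * Wᴴ := by
          simp only [W, Matrix.mul_assoc]
      _ = W * Wᴴ := by rw [this]
  refine ⟨W, ?_, posSemidef_one_sub_of_isHermitian_of_mul_self ?_ hWW⟩
  · rw [hWMV, diagonal_mul_diagonal]
    congr 1
    funext j
    rcases eq_or_ne (s j) 0 with h | h
    · simp [g, h]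
    · simp only [g]
      push_cast
      field_simp
  · exact isHermitian_mul_conjTranspose_self W

end Matrix

section TraceNorm

variable {μ ν ι : Type*} [Fintype ι]

lemma traceNorm_eq_sum_sqrt_eigenvalues [Fintype μ] [Fintype ν] [DecidableEq ν] (M : Matrix μ ν ℂ) :
    traceNorm M = ∑ j, √((posSemidef_conjTranspose_mul_self M).1.eigenvalues j) := by
  rw [traceNorm, trace_unitary_mul_mul_star, trace_diagonal, Complex.re_sum]
  simp

theorem traceNorm_mul_conjTranspose_le [Fintype μ] [Fintype ν] [DecidableEq μ] [DecidableEq ν]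
    (A : Matrix μ ι ℂ) (B : Matrix ν ι ℂ) :
    traceNorm (A * Bᴴ) ≤ √(Aᴴ * A).trace.re * √(Bᴴ * B).trace.re := by
  set M := A * Bᴴ
  set hM := posSemidef_conjTranspose_mul_self M
  set U : Matrix ν ν ℂ := (hM.1.eigenvectorUnitary : Matrix ν ν ℂ)
  have hdiag : Uᴴ * (Mᴴ * M) * U =
      diagonal fun j => ((√(hM.1.eigenvalues j) ^ 2 : ℝ) : ℂ) := by
    have := hM.1.conjStarAlgAut_star_eigenvectorUnitary
    rw [Unitary.conjStarAlgAut_apply, Unitary.coe_star, star_star] at this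
    simp only [Real.sq_sqrt (hM.eigenvalues_nonneg _)]
    exact this
  obtain ⟨W, hWM, hW⟩ := exists_partialIsometry_conjTranspose_mul_mul_eq_diagonal M U _ hdiag
  have hU : (1 - U * Uᴴ).PosSemidef := by
    rw [← star_eq_conjTranspose, Unitary.mul_star_self_of_mem hM.1.eigenvectorUnitary.2, sub_self]
    exact PosSemidef.zero
  calc traceNorm M = (Wᴴ * M * U).trace.re := by
        rw [hWM, trace_diagonal, traceNorm_eq_sum_sqrt_eigenvalues, Complex.re_sum]
        simp
    _ = ((Aᴴ * W)ᴴ * (Bᴴ * U)).trace.re := by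
        simp only [M, conjTranspose_mul, conjTranspose_conjTranspose, Matrix.mul_assoc]
    _ ≤ √((Aᴴ * W)ᴴ * (Aᴴ * W)).trace.re * √((Bᴴ * U)ᴴ * (Bᴴ * U)).trace.re :=
        re_trace_conjTranspose_mul_le (Aᴴ * W) (Bᴴ * U)
    _ ≤ √(Aᴴ * A).trace.re * √(Bᴴ * B).trace.re := by
        gcongr √?_ * √?_
        · exact re_trace_conjTranspose_mul_self_le_of_posSemidef_one_sub A hW
        · exact re_trace_conjTranspose_mul_self_le_of_posSemidef_one_sub B hU

noncomputable def weightedColumns (w : ι → ℝ) (x : ι → μ → ℝ) : Matrix μ ι ℂ :=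
  of fun r i => ((√(w i) * x i r : ℝ) : ℂ)

lemma re_trace_conjTranspose_mul_weightedColumns [Fintype μ] {w : ι → ℝ} (hw : ∀ i, 0 ≤ w i)
    (x : ι → μ → ℝ) :
    ((weightedColumns w x)ᴴ * weightedColumns w x).trace.re = ∑ i, w i * ∑ r, x i r ^ 2 := by
  simp only [trace, diag, mul_apply, conjTranspose_apply, weightedColumns, of_apply,
    RCLike.star_def, Complex.conj_ofReal, Complex.re_sum, ← Complex.ofReal_mul, Complex.ofReal_re,
    Finset.mul_sum]
  refine Finset.sum_congr rfl fun i _ => Finset.sum_congr rfl fun r _ => ?_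
  rw [mul_mul_mul_comm, Real.mul_self_sqrt (hw i), sq]

lemma weightedColumns_mul_conjTranspose {w : ι → ℝ} (hw : ∀ i, 0 ≤ w i)
    (x : ι → μ → ℝ) (y : ι → ν → ℝ) :
    weightedColumns w x * (weightedColumns w y)ᴴ =
      of fun r s => ∑ i, (w i : ℂ) * x i r * y i s := by
  ext r s
  simp only [mul_apply, conjTranspose_apply, weightedColumns, of_apply,
    RCLike.star_def, Complex.conj_ofReal, ← Complex.ofReal_mul]
  refine Finset.sum_congr rfl fun i _ => ?_
  rw [mul_mul_mul_comm, Real.mul_self_sqrt (hw i)]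
  push_cast
  ring

theorem traceNorm_sum_weighted_le [Fintype μ] [Fintype ν] [DecidableEq μ] [DecidableEq ν]
    {w : ι → ℝ} (hw : ∀ i, 0 ≤ w i) (x : ι → μ → ℝ) (y : ι → ν → ℝ) :
    traceNorm (of fun r s => ∑ i, (w i : ℂ) * x i r * y i s) ≤
      √(∑ i, w i * ∑ r, x i r ^ 2) * √(∑ i, w i * ∑ s, y i s ^ 2) := by
  rw [← weightedColumns_mul_conjTranspose hw, ← re_trace_conjTranspose_mul_weightedColumns hw,
    ← re_trace_conjTranspose_mul_weightedColumns hw]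
  exact traceNorm_mul_conjTranspose_le _ _

end TraceNorm

lemma IsDensityMatrix.re_trace_mul_self_le_one {ι : Type*} [Fintype ι] [DecidableEq ι]
    {σ : Matrix ι ι ℂ} (hσ : IsDensityMatrix σ) : (σ * σ).trace.re ≤ 1 := by
  obtain ⟨hpsd, htr⟩ := hσ
  set ev := hpsd.1.eigenvalues
  have hsum : ∑ i, ev i = 1 := by
    have h : ((∑ i, ev i : ℝ) : ℂ) = 1 := by
      rw [← htr, hpsd.1.trace_eq_sum_eigenvalues, Complex.ofReal_sum]; rfl
    exact_mod_cast h
  have hsq : (σ * σ).trace.re = ∑ i, ev i ^ 2 := by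
    conv_lhs => rw [hpsd.1.spectral_theorem, ← map_mul, Unitary.conjStarAlgAut_apply,
      trace_unitary_mul_mul_star, diagonal_mul_diagonal, trace_diagonal]
    simp [sq, ev]
  calc (σ * σ).trace.re = ∑ i, ev i ^ 2 := hsq
    _ ≤ (∑ i, ev i) ^ 2 := Finset.sum_sq_le_sq_sum_of_nonneg fun i _ => hpsd.eigenvalues_nonneg i
    _ = 1 := by rw [hsum, one_pow]

lemma IsDensityMatrix.re_trace_mul_self_sub_smul_one_le {d : ℕ} {σ : Matrix (Fin d) (Fin d) ℂ}
    (hσ : IsDensityMatrix σ) (hd : (d : ℝ) ≠ 0) :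
    ((σ - ((1 / d : ℝ) : ℂ) • 1) * (σ - ((1 / d : ℝ) : ℂ) • 1)).trace.re ≤ 1 - 1 / d := by
  have hexp : ((σ - ((1 / d : ℝ) : ℂ) • 1) * (σ - ((1 / d : ℝ) : ℂ) • 1)).trace.re =
      (σ * σ).trace.re - 1 / d := by
    simp only [Matrix.sub_mul, Matrix.mul_sub, Matrix.smul_mul, Matrix.mul_smul, Matrix.one_mul,
      Matrix.mul_one, trace_sub, trace_smul, trace_one, hσ.2, Fintype.card_fin, smul_eq_mul]
    simp [hd]
  linarith [hσ.re_trace_mul_self_le_one]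

lemma Fintype.sum_sq_eq_sum_sq_sub_add {ι : Type*} [Fintype ι] (c : ℝ) (t : ι → ℝ) :
    ∑ i, t i ^ 2 = ∑ i, (t i - c) ^ 2 + 2 * c * ∑ i, (t i - c) + Fintype.card ι * c ^ 2 := by
  simp only [Finset.mul_sum, ← Finset.card_univ, ← nsmul_eq_mul, ← Finset.sum_const,
    ← Finset.sum_add_distrib]
  exact Finset.sum_congr rfl fun i _ => by ring

lemma le_of_le_sqrt_mul_sqrt {S a c : ℝ} (hS : 0 ≤ S) (ha : 0 ≤ a) (hc : 0 ≤ c)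
    (h : S ≤ √a * √(c * S)) : S ≤ c * a := by
  rw [← Real.sqrt_mul ha, Real.le_sqrt hS (by positivity)] at h
  rcases hS.eq_or_lt with rfl | hS
  · positivity
  · nlinarith

section MUM

variable {d : ℕ} {κ : ℝ} {P : Fin (d + 1) → Fin d → Matrix (Fin d) (Fin d) ℂ}

lemma IsMUMs.two_le (hP : IsMUMs d κ P) (hd : d ≠ 0) : 2 ≤ d := by
  obtain ⟨-, -, -, -, -, -, hlt, hle⟩ := hP
  rcases Nat.lt_or_ge d 2 with h | h
  · obtain rfl : d = 1 := by omega
    norm_num at hlt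
    linarith
  · exact h

lemma IsMUMs.nonneg (hP : IsMUMs d κ P) : 0 ≤ κ :=
  (one_div_nonneg.mpr d.cast_nonneg).trans hP.2.2.2.2.2.2.1.le

lemma IsMUMs.one_sub_div_le (hP : IsMUMs d κ P) (hd : 2 ≤ d) : (1 - κ) / (d - 1) ≤ κ := by
  have hd' : (2 : ℝ) ≤ d := by exact_mod_cast hd
  obtain ⟨-, -, -, -, -, -, hlt, -⟩ := hP
  rw [div_lt_iff₀ (by linarith)] at hlt
  rw [div_le_iff₀ (by linarith)]
  nlinarith

lemma IsMUMs.trace_mul_same_block (hP : IsMUMs d κ P) (b : Fin (d + 1)) (n n' : Fin d) :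
    (P b n * P b n').trace =
      (((1 - κ) / (d - 1) + (κ - (1 - κ) / (d - 1)) * if n = n' then 1 else 0 : ℝ) : ℂ) := by
  obtain ⟨-, -, -, hdiag, hoff, -⟩ := hP
  split_ifs with h
  · rw [h, hdiag]
    push_cast
    ring
  · rw [hoff b n n' h]
    push_cast
    ring

lemma IsMUMs.trace_mul_sum_smul (hP : IsMUMs d κ P) {x : Fin (d + 1) × Fin d → ℝ}
    (hx : ∀ b, ∑ n, x (b, n) = 0) (b : Fin (d + 1)) (n : Fin d) :
    (P b n * ∑ q, (x q : ℂ) • P q.1 q.2).trace =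
      (((κ - (1 - κ) / (d - 1)) * x (b, n) : ℝ) : ℂ) := by
  simp only [Matrix.mul_sum, Matrix.mul_smul, trace_sum, trace_smul, smul_eq_mul,
    Fintype.sum_prod_type]
  rw [Finset.sum_eq_single b]
  · simp only [hP.trace_mul_same_block, ← Complex.ofReal_mul, ← Complex.ofReal_sum]
    congr 1
    simp [mul_add, Finset.sum_add_distrib, ← Finset.sum_mul, hx, mul_ite, Finset.sum_ite_eq]
    ring
  · intro b' _ hb'
    simp only [hP.2.2.2.2.2.1 b b' n _ (Ne.symm hb'), ← Finset.sum_mul, ← Complex.ofReal_sum, hx,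
      Complex.ofReal_zero, zero_mul]
  · simp

lemma IsMUMs.sum_sq_re_trace_mul_le_of_trace_eq_zero (hP : IsMUMs d κ P) (hd : 2 ≤ d)
    {X : Matrix (Fin d) (Fin d) ℂ} (hX : X.IsHermitian) (hX0 : X.trace = 0) :
    ∑ p : Fin (d + 1) × Fin d, (P p.1 p.2 * X).trace.re ^ 2 ≤
      (κ - (1 - κ) / (d - 1)) * (X * X).trace.re := by
  set x : Fin (d + 1) × Fin d → ℝ := fun p => (P p.1 p.2 * X).trace.re
  have hx : ∀ p, (P p.1 p.2 * X).trace = x p := fun p =>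
    IsHermitian.trace_mul_eq_ofReal_re (hP.1 p.1 p.2).1 hX
  have hblock : ∀ b, ∑ n, x (b, n) = 0 := fun b => by
    have h : ((∑ n, x (b, n) : ℝ) : ℂ) = 0 := by
      simp only [Complex.ofReal_sum, ← hx, ← trace_sum, ← Finset.sum_mul, hP.2.1 b,
        Matrix.one_mul, hX0]
    exact_mod_cast h
  set R := ∑ q, (x q : ℂ) • P q.1 q.2
  have hR : Rᴴ = R := by
    simp only [R, conjTranspose_sum, conjTranspose_smul, RCLike.star_def, Complex.conj_ofReal,
      fun q : Fin (d + 1) × Fin d => (hP.1 q.1 q.2).1.eq]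
  have hXR : (Xᴴ * R).trace.re = ∑ p, x p ^ 2 := by
    simp only [hX.eq, R, Matrix.mul_sum, Matrix.mul_smul, trace_sum, trace_smul, trace_mul_comm X,
      hx, smul_eq_mul, ← Complex.ofReal_mul, ← Complex.ofReal_sum, Complex.ofReal_re, sq]
  have hRR : (Rᴴ * R).trace.re = (κ - (1 - κ) / (d - 1)) * ∑ p, x p ^ 2 := by
    have hsplit : (R * R).trace = ∑ q, (x q : ℂ) * (P q.1 q.2 * R).trace := by
      conv_lhs => rw [show R * R = (∑ q, (x q : ℂ) • P q.1 q.2) * R from rfl]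
      simp only [Finset.sum_mul, Matrix.smul_mul, trace_sum, trace_smul, smul_eq_mul]
    rw [hR, hsplit]
    simp only [R, hP.trace_mul_sum_smul hblock, ← Complex.ofReal_mul, ← Complex.ofReal_sum,
      Complex.ofReal_re]
    rw [Finset.mul_sum]
    exact Finset.sum_congr rfl fun p _ => by ring
  have hgap : 0 ≤ κ - (1 - κ) / (d - 1) := sub_nonneg.mpr (hP.one_sub_div_le hd)
  have hXX : 0 ≤ (Xᴴ * X).trace.re :=
    (RCLike.nonneg_iff.mp (posSemidef_conjTranspose_mul_self X).trace_nonneg).1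
  have hCS : (Xᴴ * R).trace.re ≤ √(Xᴴ * X).trace.re * √(Rᴴ * R).trace.re :=
    re_trace_conjTranspose_mul_le X R
  rw [hXR, hRR] at hCS
  show ∑ p, x p ^ 2 ≤ _
  rw [show X * X = Xᴴ * X by rw [hX.eq]]
  exact le_of_le_sqrt_mul_sqrt (Finset.sum_nonneg fun p _ => sq_nonneg (x p)) hXX hgap hCS

lemma IsMUMs.sum_sq_re_trace_mul_le (hP : IsMUMs d κ P) {σ : Matrix (Fin d) (Fin d) ℂ}
    (hσ : IsDensityMatrix σ) : ∑ p : Fin (d + 1) × Fin d, (P p.1 p.2 * σ).trace.re ^ 2 ≤ 1 + κ := by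
  have hd : 2 ≤ d := hP.two_le (by rintro rfl; simp [IsDensityMatrix] at hσ)
  have hd' : (2 : ℝ) ≤ d := by exact_mod_cast hd
  have hd0 : (d : ℝ) ≠ 0 := by positivity
  set X := σ - ((1 / d : ℝ) : ℂ) • (1 : Matrix (Fin d) (Fin d) ℂ)
  have hX : X.IsHermitian := hσ.1.1.sub (isHermitian_one.smul (Complex.conj_ofReal _))
  have hX0 : X.trace = 0 := by
    simp only [X, trace_sub, trace_smul, trace_one, hσ.2, Fintype.card_fin, smul_eq_mul]
    push_cast
    field_simp
    ring
  have hPX : ∀ p : Fin (d + 1) × Fin d,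
      (P p.1 p.2 * X).trace.re = (P p.1 p.2 * σ).trace.re - 1 / d := fun p => by
    simp [X, Matrix.mul_sub, hP.2.2.1]
  have hsum : ∑ p : Fin (d + 1) × Fin d, ((P p.1 p.2 * σ).trace.re - 1 / d) = 0 := by
    have h : ∑ p : Fin (d + 1) × Fin d, (P p.1 p.2 * X).trace = 0 := by
      rw [Fintype.sum_prod_type]
      refine Finset.sum_eq_zero fun b _ => ?_
      rw [← trace_sum, ← Finset.sum_mul, hP.2.1 b, Matrix.one_mul, hX0]
    simpa [hPX] using congrArg Complex.re h
  have hXX := hσ.re_trace_mul_self_sub_smul_one_le hd0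
  have hcentered := hP.sum_sq_re_trace_mul_le_of_trace_eq_zero hd hX hX0
  simp only [hPX] at hcentered
  have hgap := sub_nonneg.mpr (hP.one_sub_div_le hd)
  have halg :
      (κ - (1 - κ) / (d - 1)) * (1 - 1 / d) + ((d + 1) * d : ℕ) * (1 / d) ^ 2 = 1 + κ := by
    have : (d : ℝ) - 1 ≠ 0 := by linarith
    push_cast
    field_simp
    ring
  rw [Fintype.sum_sq_eq_sum_sq_sub_add (1 / d), hsum, mul_zero, add_zero, Fintype.card_prod,
    Fintype.card_fin, Fintype.card_fin, ← halg]
  gcongr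
  exact hcentered.trans (mul_le_mul_of_nonneg_left hXX hgap)

lemma IsMUMs.sum_mul_sum_sq_le {m : ℕ} {ι : Type*} [Fintype ι] (hP : IsMUMs d κ P)
    (a : Fin m → ℝ) {w : ι → ℝ} (hw0 : ∀ i, 0 ≤ w i) (hw1 : ∑ i, w i = 1)
    {σ : ι → Matrix (Fin d) (Fin d) ℂ} (hσ : ∀ i, IsDensityMatrix (σ i)) :
    ∑ i, w i * ∑ r, Sum.elim a (fun p : Fin (d + 1) × Fin d => (P p.1 p.2 * σ i).trace.re) r ^ 2 ≤
      ∑ j, a j ^ 2 + 1 + κ := by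
  calc _ ≤ ∑ i, w i * (∑ j, a j ^ 2 + 1 + κ) := by
        refine Finset.sum_le_sum fun i _ => mul_le_mul_of_nonneg_left ?_ (hw0 i)
        rw [Fintype.sum_sum_type]
        simp only [Sum.elim_inl, Sum.elim_inr]
        linarith [hP.sum_sq_re_trace_mul_le (hσ i)]
    _ = ∑ j, a j ^ 2 + 1 + κ := by rw [← Finset.sum_mul, hw1, one_mul]

end MUM

section SeparableStates

variable {dA dB : ℕ}

lemma trace_mul_ptraceA (X : Matrix (Fin dB) (Fin dB) ℂ)
    (ρ : Matrix (Fin dA × Fin dB) (Fin dA × Fin dB) ℂ) :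
    (X * ptraceA ρ).trace = ((1 ⊗ₖ X) * ρ).trace := by
  simp only [trace, diag, mul_apply, ptraceA, of_apply, kroneckerMap_apply, one_apply,
    Fintype.sum_prod_type, ite_mul, one_mul, zero_mul, Finset.mul_sum]
  conv_rhs => enter [2, k, 2, i]; rw [Finset.sum_comm]
  simp only [Finset.sum_ite_eq, Finset.mem_univ, if_true]
  conv_rhs => rw [Finset.sum_comm]; enter [2, i]; rw [Finset.sum_comm]

lemma trace_mul_ptraceB (X : Matrix (Fin dA) (Fin dA) ℂ)
    (ρ : Matrix (Fin dA × Fin dB) (Fin dA × Fin dB) ℂ) :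
    (X * ptraceB ρ).trace = ((X ⊗ₖ 1) * ρ).trace := by
  simp only [trace, diag, mul_apply, ptraceB, of_apply, kroneckerMap_apply, one_apply,
    Fintype.sum_prod_type, mul_ite, mul_one, mul_zero, Finset.mul_sum, ite_mul, zero_mul,
    Finset.sum_ite_eq, Finset.mem_univ, if_true]
  exact Finset.sum_congr rfl fun i _ => Finset.sum_comm

lemma trace_kronecker_mul_sum_smul_kronecker {ι : Type*} [Fintype ι]
    (A : Matrix (Fin dA) (Fin dA) ℂ) (B : Matrix (Fin dB) (Fin dB) ℂ) (w : ι → ℂ)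
    (ρA : ι → Matrix (Fin dA) (Fin dA) ℂ) (ρB : ι → Matrix (Fin dB) (Fin dB) ℂ) :
    ((A ⊗ₖ B) * ∑ i, w i • (ρA i ⊗ₖ ρB i)).trace =
      ∑ i, w i * ((A * ρA i).trace * (B * ρB i).trace) := by
  simp only [Matrix.mul_sum, Matrix.mul_smul, trace_sum, trace_smul, smul_eq_mul,
    ← mul_kronecker_mul, trace_kronecker]

noncomputable def correlationMatrix {m n : ℕ} (a : Fin m → ℝ) (b : Fin n → ℝ)
    (P : Fin (dA + 1) → Fin dA → Matrix (Fin dA) (Fin dA) ℂ)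
    (Q : Fin (dB + 1) → Fin dB → Matrix (Fin dB) (Fin dB) ℂ)
    (ρ : Matrix (Fin dA × Fin dB) (Fin dA × Fin dB) ℂ) :
    Matrix (Fin m ⊕ (Fin (dA + 1) × Fin dA)) (Fin n ⊕ (Fin (dB + 1) × Fin dB)) ℂ :=
  Matrix.fromBlocks
    (Matrix.of fun (i : Fin m) (j : Fin n) => ((a i : ℂ) * (b j : ℂ)))
    (Matrix.of fun (i : Fin m) (q : Fin (dB + 1) × Fin dB) =>
      (a i : ℂ) * (Q q.1 q.2 * ptraceA ρ).trace)
    (Matrix.of fun (p : Fin (dA + 1) × Fin dA) (j : Fin n) =>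
      (P p.1 p.2 * ptraceB ρ).trace * (b j : ℂ))
    (Matrix.of fun (p : Fin (dA + 1) × Fin dA) (q : Fin (dB + 1) × Fin dB) =>
      ((P p.1 p.2 ⊗ₖ Q q.1 q.2) * ρ).trace)

lemma correlationMatrix_sum_smul_kronecker {m n K : ℕ} (a : Fin m → ℝ) (b : Fin n → ℝ)
    {P : Fin (dA + 1) → Fin dA → Matrix (Fin dA) (Fin dA) ℂ}
    {Q : Fin (dB + 1) → Fin dB → Matrix (Fin dB) (Fin dB) ℂ}
    (hP : ∀ b n, (P b n).IsHermitian) (hQ : ∀ b n, (Q b n).IsHermitian)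
    {w : Fin K → ℝ} (hw1 : ∑ i, w i = 1)
    {ρA : Fin K → Matrix (Fin dA) (Fin dA) ℂ} {ρB : Fin K → Matrix (Fin dB) (Fin dB) ℂ}
    (hρA : ∀ i, IsDensityMatrix (ρA i)) (hρB : ∀ i, IsDensityMatrix (ρB i)) :
    correlationMatrix a b P Q (∑ i, (w i : ℂ) • (ρA i ⊗ₖ ρB i)) =
      of fun r s => ∑ i, (w i : ℂ) *
        Sum.elim a (fun p : Fin (dA + 1) × Fin dA => (P p.1 p.2 * ρA i).trace.re) r *
        Sum.elim b (fun q : Fin (dB + 1) × Fin dB => (Q q.1 q.2 * ρB i).trace.re) s := by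
  have hθ : ∀ i (p : Fin (dA + 1) × Fin dA),
      ((P p.1 p.2 * ρA i).trace.re : ℂ) = (P p.1 p.2 * ρA i).trace := fun i p =>
    (IsHermitian.trace_mul_eq_ofReal_re (hP p.1 p.2) (hρA i).1.1).symm
  have hη : ∀ i (q : Fin (dB + 1) × Fin dB),
      ((Q q.1 q.2 * ρB i).trace.re : ℂ) = (Q q.1 q.2 * ρB i).trace := fun i q =>
    (IsHermitian.trace_mul_eq_ofReal_re (hQ q.1 q.2) (hρB i).1.1).symm
  have hw1' : ∑ i, (w i : ℂ) = 1 := by exact_mod_cast hw1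
  ext (r | p) (s | q) <;>
    simp only [correlationMatrix, fromBlocks_apply₁₁, fromBlocks_apply₁₂, fromBlocks_apply₂₁,
      fromBlocks_apply₂₂, of_apply, Sum.elim_inl, Sum.elim_inr, trace_mul_ptraceA,
      trace_mul_ptraceB, trace_kronecker_mul_sum_smul_kronecker, (hρA _).2, (hρB _).2, one_mul,
      mul_one]
  · rw [← Finset.sum_mul, ← Finset.sum_mul, hw1', one_mul]
  · rw [Finset.mul_sum]
    exact Finset.sum_congr rfl fun i _ => by rw [hη]; ring
  · rw [Finset.sum_mul]
    exact Finset.sum_congr rfl fun i _ => by rw [hθ]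
  · exact Finset.sum_congr rfl fun i _ => by rw [hθ, hη, mul_assoc]

end SeparableStates

theorem separability_criterion_MUM_general
    (dA dB m n : ℕ) (κA κB : ℝ)
    (P : Fin (dA + 1) → Fin dA → Matrix (Fin dA) (Fin dA) ℂ)
    (Q : Fin (dB + 1) → Fin dB → Matrix (Fin dB) (Fin dB) ℂ)
    (hP : IsMUMs dA κA P) (hQ : IsMUMs dB κB Q)
    (a : Fin m → ℝ) (b : Fin n → ℝ)
    (ρ : Matrix (Fin dA × Fin dB) (Fin dA × Fin dB) ℂ)
    (hsep : SeparableState ρ) :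
    traceNorm (Matrix.fromBlocks
      (Matrix.of fun (i : Fin m) (j : Fin n) => ((a i : ℂ) * (b j : ℂ)))
      (Matrix.of fun (i : Fin m) (q : Fin (dB + 1) × Fin dB) =>
        (a i : ℂ) * (Q q.1 q.2 * ptraceA ρ).trace)
      (Matrix.of fun (p : Fin (dA + 1) × Fin dA) (j : Fin n) =>
        (P p.1 p.2 * ptraceB ρ).trace * (b j : ℂ))
      (Matrix.of fun (p : Fin (dA + 1) × Fin dA) (q : Fin (dB + 1) × Fin dB) =>
        ((P p.1 p.2 ⊗ₖ Q q.1 q.2) * ρ).trace)) ≤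
    Real.sqrt ((∑ i, a i ^ 2 + 1 + κA) * (∑ j, b j ^ 2 + 1 + κB)) := by
  obtain ⟨K, w, ρA, ρB, hw0, hw1, hρA, hρB, rfl⟩ := hsep
  have hκA : 0 ≤ ∑ i, a i ^ 2 + 1 + κA := add_nonneg (by positivity) hP.nonneg
  change traceNorm (correlationMatrix a b P Q (∑ i, (w i : ℂ) • (ρA i ⊗ₖ ρB i))) ≤ _
  rw [correlationMatrix_sum_smul_kronecker a b (fun b n => (hP.1 b n).1) (fun b n => (hQ.1 b n).1)
    hw1 hρA hρB, Real.sqrt_mul hκA]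
  refine (traceNorm_sum_weighted_le hw0 _ _).trans ?_
  gcongr
  · exact hP.sum_mul_sum_sq_le a hw0 hw1 hρA
  · exact hQ.sum_mul_sum_sq_le b hw0 hw1 hρB

/-- Corollary 2 of the paper: for a separable bipartite state
ρ_AB, arbitrary real vectors a, b, and complete sets of MUMs with efficiency
parameters κ_A, κ_B on the two subsystems,
‖Q_{a,b}(ρ_AB)‖_tr ≤ √((|a|² + 1 + κ_A)·(|b|² + 1 + κ_B)). -/
theorem separability_criterion_MUM
    (dA dB m n : ℕ) (κA κB : ℝ)
    (P : Fin (dA + 1) → Fin dA → Matrix (Fin dA) (Fin dA) ℂ)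
    (Q : Fin (dB + 1) → Fin dB → Matrix (Fin dB) (Fin dB) ℂ)
    (hP : IsMUMs dA κA P) (hQ : IsMUMs dB κB Q)
    (a : Fin m → ℝ) (b : Fin n → ℝ)
    (ρ : Matrix (Fin dA × Fin dB) (Fin dA × Fin dB) ℂ)
    (hρ : IsDensityMatrix ρ) (hsep : SeparableState ρ) :
    traceNorm (Matrix.fromBlocks
      (Matrix.of fun (i : Fin m) (j : Fin n) => ((a i : ℂ) * (b j : ℂ)))
      (Matrix.of fun (i : Fin m) (q : Fin (dB + 1) × Fin dB) =>
        (a i : ℂ) * (Q q.1 q.2 * ptraceA ρ).trace)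
      (Matrix.of fun (p : Fin (dA + 1) × Fin dA) (j : Fin n) =>
        (P p.1 p.2 * ptraceB ρ).trace * (b j : ℂ))
      (Matrix.of fun (p : Fin (dA + 1) × Fin dA) (q : Fin (dB + 1) × Fin dB) =>
        ((P p.1 p.2 ⊗ₖ Q q.1 q.2) * ρ).trace)) ≤
    Real.sqrt ((∑ i, a i ^ 2 + 1 + κA) * (∑ j, b j ^ 2 + 1 + κB)) :=
  separability_criterion_MUM_general dA dB m n κA κB P Q hP hQ a b ρ hsep
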